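/- Let f be a transcendental entire function in the Eremenko–Lyubich class 𝓑. Then there exists λ > 0 such that the function g(z) = λ f(z) is of disjoint type; indeed λ can be chosen so that S(g) ∪ {0, g(0)} is contained in the open unit disc 𝔻 and g maps the closed unit disc into 𝔻. -/

import Mathlib

open Filter Topology Metric Set

/-- The chordal (spherical) distance on ℂ. -/
noncomputable def chordal (u v : ℂ) : ℝ :=
  ‖u - v‖ / Real.sqrt ((1 + ‖u‖ ^ 2) * (1 + ‖v‖ ^ 2))

/-- `f` is a transcendental entire function. -/
def IsTranscendentalEntire (f : ℂ → ℂ) : Prop :=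
  Differentiable ℂ f ∧ ¬ ∃ p : Polynomial ℂ, ∀ z, f z = p.eval z

/-- The set of critical values of `f`. -/
def criticalValues (f : ℂ → ℂ) : Set ℂ := {w | ∃ z, deriv f z = 0 ∧ f z = w}

/-- The set of finite asymptotic values of `f`. -/
def asymptoticValues (f : ℂ → ℂ) : Set ℂ :=
  {a | ∃ γ : ℝ → ℂ, ContinuousOn γ (Set.Ici 0) ∧
    Filter.Tendsto (fun t => ‖γ t‖) Filter.atTop Filter.atTop ∧
    Filter.Tendsto (fun t => f (γ t)) Filter.atTop (nhds a)}

/-- The set of singular values of `f`. -/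
def singularValues (f : ℂ → ℂ) : Set ℂ :=
  closure (criticalValues f ∪ asymptoticValues f)

/-- The postsingular set of `f`. -/
def postSingularSet (f : ℂ → ℂ) : Set ℂ :=
  closure (⋃ n : ℕ, f^[n] '' singularValues f)

/-- The Eremenko–Lyubich class `𝓑`. -/
def ClassB (f : ℂ → ℂ) : Prop := Bornology.IsBounded (singularValues f)

/-- The escaping set of `f`. -/
def escapingSet (f : ℂ → ℂ) : Set ℂ :=
  {z | Filter.Tendsto (fun n => ‖f^[n] z‖) Filter.atTop Filter.atTop}

/-- The Fatou set of `f`: points near which the family of iterates is uniformly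
equicontinuous (Euclidean metric on the domain, chordal metric on the codomain). -/
def fatouSet (f : ℂ → ℂ) : Set ℂ :=
  {z | ∃ δ > 0, ∀ ε > 0, ∃ η > 0, ∀ n : ℕ, ∀ u ∈ Metric.ball z δ, ∀ v ∈ Metric.ball z δ,
    dist u v < η → chordal (f^[n] u) (f^[n] v) < ε}

/-- The Julia set of `f`. -/
def juliaSet (f : ℂ → ℂ) : Set ℂ := (fatouSet f)ᶜ

/-- `f` is of disjoint type with associated domain `D`. -/
def IsDisjointTypeWith (f : ℂ → ℂ) (D : Set ℂ) : Prop :=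
  IsOpen D ∧ IsConnected D ∧ Bornology.IsBounded D ∧ SimplyConnectedSpace D ∧
    singularValues f ∪ {0, f 0} ⊆ D ∧ f '' closure D ⊆ D

/-- The Julia set of a disjoint type function with associated domain `D`. -/
def juliaSetDT (f : ℂ → ℂ) (D : Set ℂ) : Set ℂ := {z | ∀ n : ℕ, f^[n] z ∉ D}

/-- `f` has finite order. -/
def FiniteOrder (f : ℂ → ℂ) : Prop :=
  ∃ C > (0:ℝ), ∃ R > (0:ℝ), ∀ z : ℂ, R ≤ ‖z‖ →
    ‖f z‖ ≤ Real.exp (‖z‖ ^ C)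

open scoped Pointwise

/-! Multiplying `f` by `λ ≠ 0` multiplies its critical and asymptotic values, hence `S(f)`, by `λ`.
So it suffices to choose `λ` shrinking the bounded set `S(f) ∪ f(closedBall 0 1)` into the unit
disc; this also places `g 0` there, and `0` lies in the disc anyway. -/

section Rescaling

variable (f : ℂ → ℂ) {c : ℂ}

theorem criticalValues_const_mul (hc : c ≠ 0) :
    criticalValues (fun z => c * f z) = c • criticalValues f := by
  ext w
  -- `deriv_const_mul_field` needs no differentiability: both sides are junk `0` otherwise.
  simp only [criticalValues, deriv_const_mul_field, mul_eq_zero, hc, false_or,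
    mem_smul_set, smul_eq_mul]
  constructor
  · rintro ⟨z, hz, rfl⟩
    exact ⟨f z, ⟨z, hz, rfl⟩, rfl⟩
  · rintro ⟨_, ⟨z, hz, rfl⟩, rfl⟩
    exact ⟨z, hz, rfl⟩

theorem asymptoticValues_const_mul (hc : c ≠ 0) :
    asymptoticValues (fun z => c * f z) = c • asymptoticValues f := by
  ext a
  rw [mem_smul_set_iff_inv_smul_mem₀ hc]
  simp only [asymptoticValues]
  refine exists_congr fun γ => and_congr_right fun _ => and_congr_right fun _ => ?_
  conv_lhs => rw [← smul_inv_smul₀ hc a]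
  exact tendsto_const_smul_iff₀ hc

theorem singularValues_const_mul (hc : c ≠ 0) :
    singularValues (fun z => c * f z) = c • singularValues f := by
  rw [singularValues, singularValues, criticalValues_const_mul f hc,
    asymptoticValues_const_mul f hc, ← smul_set_union, closure_smul₀]

end Rescaling

theorem isDisjointTypeWith_ball {g : ℂ → ℂ} {x : ℂ} {r : ℝ} (hr : 0 < r)
    (hS : singularValues g ∪ {0, g 0} ⊆ ball x r) (hg : g '' closedBall x r ⊆ ball x r) :
    IsDisjointTypeWith g (ball x r) :=
  ⟨isOpen_ball, (convex_ball x r).isConnected (nonempty_ball.mpr hr), isBounded_ball,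
    haveI := (convex_ball x r).contractibleSpace (nonempty_ball.mpr hr); inferInstance,
    hS, by rwa [closure_ball x hr.ne']⟩

theorem Bornology.IsBounded.exists_pos_smul_subset_unitBall {E : Type*} [NormedAddCommGroup E]
    [NormedSpace ℂ E] {s : Set E} (hs : Bornology.IsBounded s) :
    ∃ lam > (0:ℝ), (lam : ℂ) • s ⊆ ball 0 1 := by
  obtain ⟨r, hr, hsr⟩ := hs.subset_ball_lt 0 0
  refine ⟨r⁻¹, inv_pos.mpr hr, ?_⟩
  have hr' : ((r⁻¹ : ℝ) : ℂ) ≠ 0 := by exact_mod_cast (inv_pos.mpr hr).ne'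
  calc ((r⁻¹ : ℝ) : ℂ) • s ⊆ ((r⁻¹ : ℝ) : ℂ) • ball 0 r := smul_set_mono hsr
    _ = ball 0 1 := by
      rw [_root_.smul_ball hr', smul_zero, Complex.norm_real,
        Real.norm_of_nonneg (inv_pos.mpr hr).le, inv_mul_cancel₀ hr.ne']

/-- Every function in class `𝓑` has a disjoint type map in its parameter space: for some
`λ > 0`, the map `g = λf` is of disjoint type, with the open unit disc as the associated
domain. -/
theorem exists_disjoint_type_rescaling (f : ℂ → ℂ)
    (hf : IsTranscendentalEntire f) (hB : ClassB f) :
    ∃ lam > (0:ℝ), ∀ g : ℂ → ℂ, g = (fun z => (lam : ℂ) * f z) →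
      IsDisjointTypeWith g (Metric.ball (0:ℂ) 1) ∧
      singularValues g ∪ {0, g 0} ⊆ Metric.ball (0:ℂ) 1 ∧
      g '' Metric.closedBall (0:ℂ) 1 ⊆ Metric.ball (0:ℂ) 1 := by
  have hbdd : Bornology.IsBounded (singularValues f ∪ f '' closedBall 0 1) :=
    hB.union ((isCompact_closedBall 0 1).image hf.1.continuous).isBounded
  obtain ⟨lam, hlam, hsub⟩ := hbdd.exists_pos_smul_subset_unitBall
  refine ⟨lam, hlam, ?_⟩
  rintro g rfl
  have hlam' : (lam : ℂ) ≠ 0 := by exact_mod_cast hlam.ne'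
  rw [smul_set_union] at hsub
  have himg : (fun z => (lam : ℂ) * f z) '' closedBall 0 1 ⊆ ball 0 1 := by
    rw [show (fun z => (lam : ℂ) * f z) '' closedBall 0 1 = (lam : ℂ) • f '' closedBall 0 1 by
      rw [← image_smul, image_image]; rfl]
    exact subset_union_right.trans hsub
  have hS : singularValues (fun z => (lam : ℂ) * f z) ∪ {0, (lam : ℂ) * f 0} ⊆ ball 0 1 := by
    rw [singularValues_const_mul f hlam']
    refine union_subset (subset_union_left.trans hsub) (insert_subset (mem_ball_self one_pos) ?_)
    exact singleton_subset_iff.mpr (himg ⟨0, mem_closedBall_self zero_le_one, rfl⟩)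
  exact ⟨isDisjointTypeWith_ball one_pos hS himg, hS, himg⟩
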